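/- Let N be the set of all Zermelo naturals, N = { Z(i) | i ∈ ℕ }. Then for every natural number n > 0, F(n, N) = { Z(i) | i ≤ n - 1 }. -/
import Mathlib


open ZFSet

/-- The approximation function: `F 0 A = ∅`, `F (n+1) A = {F n x | x ∈ A}`. -/
noncomputable def F : ℕ → ZFSet → ZFSet
  | 0, _ => ∅
  | n + 1, A => @ZFSet.image (F n) (Classical.allZFSetDefinable fun s => F n (s 0)) A

/-- Zermelo numerals: `Z 0 = ∅`, `Z (n+1) = {Z n}`. -/
noncomputable def Z : ℕ → ZFSet
  | 0 => ∅
  | n + 1 => {Z n}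

lemma mem_F_succ {n : ℕ} {A x : ZFSet} : x ∈ F (n + 1) A ↔ ∃ z ∈ A, F n z = x :=
  @ZFSet.mem_image (F n) (Classical.allZFSetDefinable fun s => F n (s 0)) A x

lemma F_Z (n i : ℕ) : F n (Z i) = Z (min n i) := by
  induction n generalizing i with
  | zero => simp [F, Z]
  | succ n ih =>
    cases i with
    | zero =>
      simp only [Nat.min_zero]
      show F (n+1) ∅ = (∅ : ZFSet)
      ext x
      simp [mem_F_succ]
    | succ i =>
      have hmin : min (n+1) (i+1) = min n i + 1 := by omega
      rw [hmin]
      show F (n+1) {Z i} = ({Z (min n i)} : ZFSet)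
      ext x
      simp [mem_F_succ, ih]
      tauto

theorem stmt_7 (n : ℕ) (hn : 0 < n) :
    F n (ZFSet.range Z) = ZFSet.range (fun i : {i : ℕ // i ≤ n - 1} => Z i) := by
  obtain ⟨m, rfl⟩ : ∃ m, n = m + 1 := ⟨n - 1, by omega⟩
  ext x
  simp only [mem_F_succ, ZFSet.mem_range, Set.mem_range]
  constructor
  · rintro ⟨z, ⟨i, rfl⟩, rfl⟩
    exact ⟨⟨min m i, by omega⟩, by rw [F_Z]⟩
  · rintro ⟨⟨i, hi⟩, rfl⟩
    exact ⟨Z i, ⟨i, rfl⟩, by rw [F_Z, min_eq_right (by omega : i ≤ m)]⟩
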